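/- Let (B_t)_{t≥0} be a standard d-dimensional Brownian bridge from 0 to 0 of duration 1. Then there exists C > 0 such that for all t > 0, P(diam(B) > t) ≤ C e^{−t²/8}, where diam(B) = sup_{0≤s,u≤1} |B_s − B_u|. -/

import Mathlib

open MeasureTheory ProbabilityTheory
open Real Set Filter
set_option maxHeartbeats 1000000

lemma gauss_tail (V : NNReal) {c W : ℝ} (hc : 0 < c) (hVW : (V:ℝ) ≤ W) (hWc : W ≤ c^2) :
    gaussianReal 0 V (Set.Ioi c) ≤ ENNReal.ofReal (Real.exp (-c^2/(2*W))) := by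
  rcases eq_or_ne V 0 with hV | hV
  · subst hV
    rw [gaussianReal_zero_var]
    rw [Measure.dirac_apply' _ measurableSet_Ioi]
    simp [Set.indicator, hc.not_gt, le_of_lt hc]
  · have hVpos : (0:ℝ) < V := lt_of_le_of_ne (V.coe_nonneg) (by exact_mod_cast (Ne.symm hV))
    have hWpos : (0:ℝ) < W := lt_of_lt_of_le hVpos hVW
    rw [gaussianReal_apply_eq_integral _ hV]
    apply ENNReal.ofReal_le_ofReal
    have hpdf_le : ∀ x ∈ Set.Ioi c, gaussianPDFReal 0 V x ≤
        (Real.sqrt (2 * Real.pi * V))⁻¹ * (Real.exp (c^2/(2*V)) * Real.exp (-(c/V) * x)) := by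
      intro x hx
      rw [gaussianPDFReal]
      apply mul_le_mul_of_nonneg_left _ (by positivity)
      rw [← Real.exp_add]
      apply Real.exp_le_exp.2
      have h2V : (0:ℝ) < 2*V := by positivity
      rw [div_le_iff₀ h2V]
      have he : (c^2/(2*(V:ℝ)) + -(c/V)*x)*(2*V) = c^2 - 2*c*x := by field_simp; ring
      rw [he]
      nlinarith [sq_nonneg (x - c), hx.out]
    have hint : IntegrableOn (fun x => (Real.sqrt (2 * Real.pi * V))⁻¹ *
        (Real.exp (c^2/(2*V)) * Real.exp (-(c/V) * x))) (Set.Ioi c) := by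
      apply Integrable.const_mul
      apply Integrable.const_mul
      have := exp_neg_integrableOn_Ioi c (b := c/V) (by positivity)
      simpa [mul_comm, neg_mul, IntegrableOn] using this
    have hmono : ∫ x in Set.Ioi c, gaussianPDFReal 0 V x ≤
        ∫ x in Set.Ioi c, (Real.sqrt (2 * Real.pi * V))⁻¹ *
          (Real.exp (c^2/(2*V)) * Real.exp (-(c/V) * x)) := by
      apply setIntegral_mono_on (integrable_gaussianPDFReal 0 V).integrableOn hint
        measurableSet_Ioi hpdf_le
    refine hmono.trans ?_
    have hb : (0:ℝ) < c/V := by positivity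
    have hcalc : ∫ x in Set.Ioi c, Real.exp (-(c/V) * x) = (c/V)⁻¹ * Real.exp (-(c/V) * c) := by
      have h := MeasureTheory.integral_comp_mul_left_Ioi (fun y => Real.exp (-y)) c hb
      simp only [neg_mul] at h ⊢
      rw [h, integral_exp_neg_Ioi, smul_eq_mul]
    rw [MeasureTheory.integral_const_mul, MeasureTheory.integral_const_mul, hcalc]
    have h2 : Real.exp (c^2/(2*V)) * ((c/V)⁻¹ * Real.exp (-(c/V) * c)) =
        (V/c) * Real.exp (-c^2/(2*V)) := by
      rw [mul_left_comm, ← Real.exp_add,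
        show c^2/(2*(V:ℝ)) + -(c/V)*c = -c^2/(2*V) by field_simp; ring, inv_div]
    rw [h2]
    have hsV : Real.sqrt V ≤ c := by
      rw [show c = Real.sqrt (c^2) by rw [Real.sqrt_sq hc.le]]
      exact Real.sqrt_le_sqrt (hVW.trans hWc)
    have hsVpos : (0:ℝ) < Real.sqrt V := Real.sqrt_pos.2 hVpos
    have h2pi : Real.sqrt V ≤ Real.sqrt (2*Real.pi*V) :=
      Real.sqrt_le_sqrt (by nlinarith [Real.pi_gt_three, V.coe_nonneg])
    calc (Real.sqrt (2*Real.pi*V))⁻¹ * ((V/c) * Real.exp (-c^2/(2*V)))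
        ≤ (Real.sqrt V)⁻¹ * ((V/c) * Real.exp (-c^2/(2*W))) := by
          apply mul_le_mul (inv_anti₀ hsVpos h2pi)
          · apply mul_le_mul_of_nonneg_left _ (by positivity)
            apply Real.exp_le_exp.2
            rw [neg_div, neg_div, neg_le_neg_iff]
            gcongr
          · positivity
          · positivity
      _ = (Real.sqrt V / c) * Real.exp (-c^2/(2*W)) := by
          have hkey : (Real.sqrt (V:ℝ))⁻¹ * ((V:ℝ)/c) = Real.sqrt (V:ℝ)/c := by
            rw [show ((V:ℝ)) = Real.sqrt V * Real.sqrt V from (Real.mul_self_sqrt V.coe_nonneg).symm]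
            field_simp
            rw [Real.sqrt_sq (Real.sqrt_nonneg _)]
          rw [← mul_assoc, hkey]
      _ ≤ 1 * Real.exp (-c^2/(2*W)) := by
          apply mul_le_mul_of_nonneg_right _ (Real.exp_nonneg _)
          rw [div_le_one hc]
          exact hsV
      _ = Real.exp (-c^2/(2*W)) := one_mul _


lemma net_exists (d : ℕ) : ∃ N : Finset (EuclideanSpace ℝ (Fin d)),
    (∀ θ ∈ N, ∑ i, θ i * θ i = 1) ∧
    ∀ (w : EuclideanSpace ℝ (Fin d)) (y : ℝ), 0 < y → y < ‖w‖ →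
      ∃ θ ∈ N, 9/10 * y < ∑ i, θ i * w i := by
  have hsum_inner : ∀ (θ w : EuclideanSpace ℝ (Fin d)), ∑ i, θ i * w i = inner ℝ θ w := by
    intro θ w
    rw [PiLp.inner_apply]
    simp [RCLike.inner_apply, mul_comm]
  obtain ⟨t, hts, htfin, htcov⟩ :=
    (isCompact_sphere (0 : EuclideanSpace ℝ (Fin d)) 1).finite_cover_balls (e := 2/5) (by norm_num)
  refine ⟨htfin.toFinset, ?_, ?_⟩
  · intro θ hθ
    have : θ ∈ Metric.sphere (0 : EuclideanSpace ℝ (Fin d)) 1 := hts (htfin.mem_toFinset.1 hθ)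
    rw [hsum_inner, real_inner_self_eq_norm_sq]
    simp [mem_sphere_zero_iff_norm.1 this]
  · intro w y hy hyw
    have hw0 : w ≠ 0 := by intro h; rw [h, norm_zero] at hyw; linarith
    set u : EuclideanSpace ℝ (Fin d) := ‖w‖⁻¹ • w with hu
    have hnu : ‖u‖ = 1 := norm_smul_inv_norm hw0
    have humem : u ∈ Metric.sphere (0 : EuclideanSpace ℝ (Fin d)) 1 :=
      mem_sphere_zero_iff_norm.2 hnu
    obtain ⟨θ, hθt, hθu⟩ := Set.mem_iUnion₂.1 (htcov humem)
    have hθs : θ ∈ Metric.sphere (0 : EuclideanSpace ℝ (Fin d)) 1 := hts hθt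
    have hnθ : ‖θ‖ = 1 := mem_sphere_zero_iff_norm.1 hθs
    refine ⟨θ, htfin.mem_toFinset.2 hθt, ?_⟩
    have hdist : ‖θ - u‖ < 2/5 := by
      have := Metric.mem_ball.1 hθu
      rw [dist_eq_norm] at this
      rw [← norm_neg]
      simpa [neg_sub] using this
    have hinner_u : (23/25 : ℝ) ≤ inner ℝ θ u := by
      have hexp : ‖θ - u‖^2 = ‖θ‖^2 - 2 * inner ℝ θ u + ‖u‖^2 := norm_sub_sq_real θ u
      have h1 : ‖θ - u‖^2 < 4/25 := by nlinarith [norm_nonneg (θ - u)]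
      nlinarith [hnθ, hnu]
    have hw : (inner ℝ θ w : ℝ) = ‖w‖ * inner ℝ θ u := by
      rw [hu, real_inner_smul_right]
      have : ‖w‖ ≠ 0 := norm_ne_zero_iff.2 hw0
      field_simp
    rw [hsum_inner, hw]
    have hwy : y * (23/25) < ‖w‖ * inner ℝ θ u := by
      have h1 : y * (23/25) < ‖w‖ * (23/25) := by nlinarith
      have h2 : ‖w‖ * (23/25) ≤ ‖w‖ * inner ℝ θ u := by
        apply mul_le_mul_of_nonneg_left hinner_u (by positivity)
      linarith
    nlinarith

section EB
variable {Ω : Type*} [MeasurableSpace Ω] (μ : Measure Ω) [IsProbabilityMeasure μ]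
    (d : ℕ) (B : ℝ → Ω → EuclideanSpace ℝ (Fin d))
    (hmeas : ∀ t, Measurable (B t))
    (hgauss : ∀ (n : ℕ) (t : Fin n → ℝ), (∀ j, t j ∈ Set.Icc (0 : ℝ) 1) →
      ∀ a : Fin n → Fin d → ℝ,
        Measure.map (fun ω => ∑ j, ∑ i, a j i * B (t j) ω i) μ =
          gaussianReal 0 (Real.toNNReal
            (∑ j, ∑ k, (∑ i, a j i * a k i) * (min (t j) (t k) - t j * t k))))

include hmeas hgauss

lemma event_bound_single (θ : EuclideanSpace ℝ (Fin d)) (hθ : ∑ i, θ i * θ i = 1)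
    (u c W : ℝ) (hu : u ∈ Set.Icc (0:ℝ) 1) (hc : 0 < c)
    (hW1 : u - u*u ≤ W) (hW2 : W ≤ c^2) :
    μ {ω | c < ∑ i, θ i * B u ω i} ≤ ENNReal.ofReal (Real.exp (-c^2/(2*W))) := by
  have hBti : ∀ (t:ℝ) (i : Fin d), Measurable fun ω => B t ω i :=
    fun t i => (measurable_pi_apply i).comp ((WithLp.measurable_ofLp 2 _).comp (hmeas t))
  have hf : Measurable fun ω => ∑ i, θ i * B u ω i :=
    Finset.measurable_sum _ (fun i _ => (hBti u i).const_mul _)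
  have hlaw := hgauss 1 ![u] (by intro j; fin_cases j <;> simpa using hu) ![fun i => θ i]
  have hfun : (fun ω => ∑ j : Fin 1, ∑ i, ![fun i => θ i] j i * B (![u] j) ω i) =
      fun ω => ∑ i, θ i * B u ω i := by
    funext ω
    simp [Fin.sum_univ_one]
  have hvar : (∑ j : Fin 1, ∑ k : Fin 1, (∑ i, ![fun i => θ i] j i * ![fun i => θ i] k i) *
      (min (![u] j) (![u] k) - ![u] j * ![u] k)) = u - u*u := by
    simp [Fin.sum_univ_one, min_self, hθ]
  rw [hfun, hvar] at hlaw
  have hset : {ω | c < ∑ i, θ i * B u ω i} = (fun ω => ∑ i, θ i * B u ω i) ⁻¹' (Set.Ioi c) := rfl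
  rw [hset, ← Measure.map_apply hf measurableSet_Ioi, hlaw]
  apply gauss_tail _ hc _ hW2
  rw [Real.coe_toNNReal']
  have hW0 : 0 ≤ W := le_trans (by nlinarith [hu.1, hu.2]) hW1
  exact max_le hW1 hW0

lemma event_bound_pair (θ : EuclideanSpace ℝ (Fin d)) (hθ : ∑ i, θ i * θ i = 1)
    (u v c W : ℝ) (hu : u ∈ Set.Icc (0:ℝ) 1) (hv : v ∈ Set.Icc (0:ℝ) 1) (hvu : v ≤ u)
    (hc : 0 < c) (hW1 : u - v ≤ W) (hW2 : W ≤ c^2) :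
    μ {ω | c < ∑ i, θ i * (B u ω i - B v ω i)} ≤ ENNReal.ofReal (Real.exp (-c^2/(2*W))) := by
  have hBti : ∀ (t:ℝ) (i : Fin d), Measurable fun ω => B t ω i :=
    fun t i => (measurable_pi_apply i).comp ((WithLp.measurable_ofLp 2 _).comp (hmeas t))
  have hf : Measurable fun ω => ∑ i, θ i * (B u ω i - B v ω i) :=
    Finset.measurable_sum _ (fun i _ => (((hBti u i).sub (hBti v i)).const_mul _))
  have hlaw := hgauss 2 ![u, v] (by intro j; fin_cases j <;> simp [hu.1, hu.2, hv.1, hv.2])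
    ![fun i => θ i, fun i => -θ i]
  have hfun : (fun ω => ∑ j : Fin 2, ∑ i, ![fun i => θ i, fun i => -θ i] j i * B (![u,v] j) ω i) =
      fun ω => ∑ i, θ i * (B u ω i - B v ω i) := by
    funext ω
    rw [Fin.sum_univ_two]
    simp only [Matrix.cons_val_zero, Matrix.cons_val_one, Matrix.head_cons]
    rw [← Finset.sum_add_distrib]
    apply Finset.sum_congr rfl
    intro i _
    ring
  have hvar : (∑ j : Fin 2, ∑ k : Fin 2,
      (∑ i, ![fun i => θ i, fun i => -θ i] j i * ![fun i => θ i, fun i => -θ i] k i) *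
      (min (![u,v] j) (![u,v] k) - ![u,v] j * ![u,v] k)) = (u - v) - (u-v)^2 := by
    have hmin : min u v = v := min_eq_right hvu
    have hmin2 : min v u = v := min_eq_left hvu
    simp only [Fin.sum_univ_two, Matrix.cons_val_zero, Matrix.cons_val_one, Matrix.head_cons,
      mul_neg, neg_mul, neg_neg, Finset.sum_neg_distrib, min_self, hmin, hmin2, hθ]
    ring
  rw [hfun, hvar] at hlaw
  have hset : {ω | c < ∑ i, θ i * (B u ω i - B v ω i)} =
      (fun ω => ∑ i, θ i * (B u ω i - B v ω i)) ⁻¹' (Set.Ioi c) := rfl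
  rw [hset, ← Measure.map_apply hf measurableSet_Ioi, hlaw]
  apply gauss_tail _ hc _ hW2
  rw [Real.coe_toNNReal']
  have hW0 : 0 ≤ W := le_trans (by linarith) hW1
  have : (u - v) - (u-v)^2 ≤ W := by nlinarith [sq_nonneg (u-v)]
  exact max_le this hW0

end EB


lemma geom_bound (n : ℕ) : ∑ i ∈ Finset.range n, (11/20 : ℝ)^i ≤ 20/9 := by
  rw [geom_sum_eq (by norm_num : (11/20:ℝ) ≠ 1)]
  rw [div_le_iff_of_neg (by norm_num : (11/20:ℝ) - 1 < 0)]
  have : (0:ℝ) ≤ (11/20:ℝ)^n := by positivity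
  nlinarith

lemma chain {E : Type*} [NormedAddCommGroup E] (f : ℝ → E) (hf : Continuous f)
    (x : ℝ) (hx : 0 < x)
    (H0 : ∀ k : ℕ, k ≤ 4^3 → ‖f ((k:ℝ)/4^3)‖ ≤ 3/5*x)
    (H1 : ∀ n k : ℕ, k ≤ 4^(4+n) →
      ‖f ((k:ℝ)/4^(4+n)) - f (((k/4 : ℕ):ℝ)/4^(3+n))‖ ≤ (9/50)*(11/20)^n*x)
    (t : ℝ) (ht : t ∈ Set.Icc (0:ℝ) 1) : ‖f t‖ ≤ x := by
  obtain ⟨ht0, ht1⟩ := ht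
  have hfl_le : ∀ m : ℕ, ⌊t * 4^m⌋₊ ≤ 4^m := by
    intro m
    have h1 : t * 4^m ≤ ((4^m : ℕ) : ℝ) := by
      push_cast
      nlinarith [pow_pos (by norm_num : (0:ℝ) < 4) m]
    calc ⌊t * 4^m⌋₊ ≤ ⌊((4^m : ℕ) : ℝ)⌋₊ := Nat.floor_le_floor h1
      _ = 4^m := Nat.floor_natCast _
  set u : ℕ → ℝ := fun n => ((⌊t * 4^(3+n)⌋₊ : ℕ) : ℝ)/4^(3+n) with hu
  have hstep : ∀ n, ⌊t * 4^(3+n)⌋₊ = ⌊t * 4^(4+n)⌋₊ / 4 := by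
    intro n
    have h4 : t * 4^(3+n) = (t * 4^(4+n)) / ((4:ℕ):ℝ) := by push_cast; ring
    rw [h4, Nat.floor_div_natCast]
  have hbound : ∀ n, ‖f (u n)‖ ≤ 3/5*x + (9/50) * (∑ i ∈ Finset.range n, (11/20:ℝ)^i) * x := by
    intro n
    induction n with
    | zero =>
      simpa using H0 _ (hfl_le 3)
    | succ n ih =>
      have h1 : ‖f (u (n+1)) - f (u n)‖ ≤ (9/50)*(11/20)^n*x := by
        have := H1 n ⌊t * 4^(4+n)⌋₊ (by simpa using hfl_le (4+n))
        rw [← hstep n] at this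
        have he : (3 + (n+1)) = 4 + n := by omega
        rw [hu]
        simp only [he]
        exact this
      have h2 : ‖f (u (n+1))‖ ≤ ‖f (u n)‖ + ‖f (u (n+1)) - f (u n)‖ :=
        norm_le_insert' (f (u (n+1))) (f (u n))
      rw [Finset.sum_range_succ]
      calc ‖f (u (n+1))‖ ≤ ‖f (u n)‖ + (9/50)*(11/20)^n*x := by linarith
        _ ≤ 3/5*x + (9/50) * (∑ i ∈ Finset.range n, (11/20:ℝ)^i) * x + (9/50)*(11/20)^n*x := by
            linarith
        _ = 3/5*x + (9/50) * ((∑ i ∈ Finset.range n, (11/20:ℝ)^i) + (11/20)^n) * x := by ring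
  have hbx : ∀ n, ‖f (u n)‖ ≤ x := by
    intro n
    have := hbound n
    have hg := geom_bound n
    have hsnn : (0:ℝ) ≤ ∑ i ∈ Finset.range n, (11/20:ℝ)^i :=
      Finset.sum_nonneg (fun i _ => by positivity)
    nlinarith
  have hut : Tendsto u atTop (nhds t) := by
    apply tendsto_of_tendsto_of_tendsto_of_le_of_le
      (g := fun n : ℕ => t - (1/4:ℝ)^(3+n)) (h := fun _ : ℕ => t)
    · have h4 : Tendsto (fun n : ℕ => (1/4:ℝ)^(3+n)) atTop (nhds 0) := by
        have := tendsto_pow_atTop_nhds_zero_of_lt_one (by norm_num : (0:ℝ) ≤ 1/4)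
          (by norm_num : (1/4:ℝ) < 1)
        have hcomp := this.comp (tendsto_add_atTop_nat 3)
        simpa [Function.comp_def, add_comm] using hcomp
      simpa using tendsto_const_nhds.sub h4
    · exact tendsto_const_nhds
    · intro n
      have hp : (0:ℝ) < (4:ℝ)^(3+n) := by positivity
      have := Nat.sub_one_lt_floor (t * 4^(3+n))
      rw [hu]
      simp only
      rw [le_div_iff₀ hp]
      have h14 : (1/4:ℝ)^(3+n) * 4^(3+n) = 1 := by
        rw [← mul_pow]; norm_num
      nlinarith [this]
    · intro n
      have hp : (0:ℝ) < (4:ℝ)^(3+n) := by positivity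
      have := Nat.floor_le (by positivity : (0:ℝ) ≤ t * 4^(3+n))
      rw [hu]
      simp only
      rw [div_le_iff₀ hp]
      linarith
  have hlim : Tendsto (fun n => ‖f (u n)‖) atTop (nhds ‖f t‖) :=
    ((hf.tendsto t).comp hut).norm
  exact le_of_tendsto hlim (Eventually.of_forall hbx)


lemma beta_bound (n : ℕ) : ((7:ℝ)/10 + n/5) ≤ 1679616/1500000 * (121/100)^n := by
  induction n with
  | zero => norm_num
  | succ n ih =>
    have h1 : (1:ℝ) ≤ (121/100)^n := one_le_pow₀ (by norm_num)
    have h2 : (121/100:ℝ)^(n+1) = (121/100)*(121/100)^n := by ring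
    push_cast
    rw [h2]
    push_cast at ih
    nlinarith

lemma exp_ident (n : ℕ) (x : ℝ) :
    (9/10*(9/50*(11/20)^n*x))^2 / (2*(3/(4:ℝ)^(4+n))) =
      1679616/1500000 * (121/100)^n * x^2 := by
  have hp : (0:ℝ) < (4:ℝ)^(4+n) := by positivity
  have h1 : (11/20:ℝ)^n*(11/20)^n = (121/400)^n := by rw [← mul_pow]; norm_num
  have h2 : (121/400:ℝ)^n * 4^(4+n) = 256*(121/100)^n := by
    rw [pow_add]
    have : (121/400:ℝ)^n * 4^n = (121/100)^n := by rw [← mul_pow]; norm_num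
    calc (121/400:ℝ)^n * (4^4 * 4^n) = 4^4 * ((121/400:ℝ)^n * 4^n) := by ring
      _ = 256*(121/100)^n := by rw [this]; norm_num
  have h3 : 2*(3/(4:ℝ)^(4+n)) = 6/4^(4+n) := by ring
  rw [h3, div_div_eq_mul_div]
  calc (9/10*(9/50*(11/20)^n*x))^2 * (4:ℝ)^(4+n) / 6
      = (6561/250000) * ((11/20:ℝ)^n*(11/20)^n) * x^2 * 4^(4+n) / 6 := by ring
    _ = (6561/250000) * (121/400:ℝ)^n * x^2 * 4^(4+n) / 6 := by rw [h1]
    _ = (6561/250000) * x^2 * ((121/400:ℝ)^n * 4^(4+n)) / 6 := by ring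
    _ = (6561/250000) * x^2 * (256*(121/100:ℝ)^n) / 6 := by rw [h2]
    _ = 1679616/1500000 * (121/100)^n * x^2 := by ring


/-- Gaussian tail for the diameter of a standard `d`-dimensional Brownian bridge from `0` to `0`
of duration `1`: there is `C > 0` with `P(diam(B) > s) ≤ C e^{−s²/8}` for all `s > 0`.
The bridge is specified through its Gaussian finite-dimensional distributions: every finite
linear combination of coordinates is a centred Gaussian with covariance
`Cov(B_u^i, B_v^i) = min(u,v) − uv` and independent coordinates. -/
theorem stmt10 {Ω : Type*} [MeasurableSpace Ω] (μ : Measure Ω) [IsProbabilityMeasure μ]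
    (d : ℕ) (hd : 0 < d)
    (B : ℝ → Ω → EuclideanSpace ℝ (Fin d))
    (hmeas : ∀ t, Measurable (B t))
    (hcont : ∀ ω, Continuous fun t => B t ω)
    (hgauss : ∀ (n : ℕ) (t : Fin n → ℝ), (∀ j, t j ∈ Set.Icc (0 : ℝ) 1) →
      ∀ a : Fin n → Fin d → ℝ,
        Measure.map (fun ω => ∑ j, ∑ i, a j i * B (t j) ω i) μ =
          gaussianReal 0 (Real.toNNReal
            (∑ j, ∑ k, (∑ i, a j i * a k i) * (min (t j) (t k) - t j * t k)))) :
    ∃ C > (0 : ℝ), ∀ s : ℝ, 0 < s →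
      (μ {ω | s < sSup {r : ℝ | ∃ u ∈ Set.Icc (0 : ℝ) 1, ∃ v ∈ Set.Icc (0 : ℝ) 1,
            r = ‖B u ω - B v ω‖}}).toReal ≤ C * Real.exp (-s ^ 2 / 8) := by
  obtain ⟨N, hN1, hN2⟩ := net_exists d
  have hcard : (0:ℝ) ≤ 193 * N.card := by positivity
  refine ⟨193 * N.card + Real.exp 8 + 1, by positivity, ?_⟩
  intro s hs
  set A : Set Ω := {ω | s < sSup {r : ℝ | ∃ u ∈ Set.Icc (0 : ℝ) 1, ∃ v ∈ Set.Icc (0 : ℝ) 1,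
      r = ‖B u ω - B v ω‖}} with hA
  have htoReal1 : (μ A).toReal ≤ 1 := by
    calc (μ A).toReal ≤ (1 : ENNReal).toReal := ENNReal.toReal_mono (by norm_num) prob_le_one
      _ = 1 := by simp
  by_cases hs8 : s ≤ 8
  · -- small s: trivial bound
    have h1 : Real.exp (-(8:ℝ)) ≤ Real.exp (-s^2/8) := Real.exp_le_exp.2 (by nlinarith)
    have h2 : (1:ℝ) ≤ Real.exp 8 * Real.exp (-s^2/8) := by
      calc (1:ℝ) = Real.exp 8 * Real.exp (-8) := by rw [← Real.exp_add]; norm_num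
        _ ≤ Real.exp 8 * Real.exp (-s^2/8) :=
            mul_le_mul_of_nonneg_left h1 (Real.exp_nonneg _)
    have h3 : Real.exp 8 * Real.exp (-s^2/8) ≤
        (193 * N.card + Real.exp 8 + 1) * Real.exp (-s^2/8) := by
      apply mul_le_mul_of_nonneg_right _ (Real.exp_nonneg _)
      linarith
    linarith
  · push_neg at hs8
    set x : ℝ := s/2 with hxdef
    have hx4 : 4 < x := by rw [hxdef]; linarith
    have hx0 : 0 < x := by linarith
    have hx16 : (16:ℝ) ≤ x^2 := by nlinarith
    set e : ℝ := Real.exp (-x^2/2) with he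
    have he0 : 0 ≤ e := Real.exp_nonneg _
    -- events
    set E0 : EuclideanSpace ℝ (Fin d) → ℕ → Set Ω := fun θ k =>
      {ω | 9/10*(3/5*x) < ∑ i, θ i * B ((k:ℝ)/4^3) ω i} with hE0
    set E1 : ℕ → EuclideanSpace ℝ (Fin d) → ℕ → Set Ω := fun n θ k =>
      {ω | 9/10*(9/50*(11/20)^n*x) < ∑ i, θ i *
        (B ((k:ℝ)/4^(4+n)) ω i - B (((k/4 : ℕ):ℝ)/4^(3+n)) ω i)} with hE1
    set S0 : Set Ω := ⋃ θ ∈ N, ⋃ k ∈ Finset.range (4^3+1), E0 θ k with hS0def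
    set T : ℕ → Set Ω := fun n => ⋃ θ ∈ N, ⋃ k ∈ Finset.range (4^(4+n)+1), E1 n θ k with hTdef
    -- inclusion
    have hsub : A ⊆ S0 ∪ ⋃ n : ℕ, T n := by
      intro ω hω
      by_contra hUω
      rw [Set.mem_union] at hUω
      push_neg at hUω
      obtain ⟨hU1, hU2⟩ := hUω
      rw [hS0def] at hU1
      rw [Set.mem_iUnion] at hU2
      push_neg at hU2
      simp only [Set.mem_iUnion, not_exists] at hU1
      have hU2' : ∀ n θ, θ ∈ N → ∀ k, k ∈ Finset.range (4^(4+n)+1) → ω ∉ E1 n θ k := by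
        intro n θ hθ k hk hmem
        exact hU2 n (by rw [hTdef]; simp only [Set.mem_iUnion]; exact ⟨θ, hθ, k, hk, hmem⟩)
      have H0 : ∀ k : ℕ, k ≤ 4^3 → ‖(fun t => B t ω) ((k:ℝ)/4^3)‖ ≤ 3/5*x := by
        intro k hk
        by_contra hcon
        push_neg at hcon
        obtain ⟨θ, hθN, hθlt⟩ := hN2 (B ((k:ℝ)/4^3) ω) (3/5*x) (by positivity) hcon
        exact hU1 θ hθN k (Finset.mem_range.2 (by omega)) hθlt
      have H1 : ∀ n k : ℕ, k ≤ 4^(4+n) →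
          ‖(fun t => B t ω) ((k:ℝ)/4^(4+n)) - (fun t => B t ω) (((k/4 : ℕ):ℝ)/4^(3+n))‖
            ≤ 9/50*(11/20)^n*x := by
        intro n k hk
        by_contra hcon
        push_neg at hcon
        obtain ⟨θ, hθN, hθlt⟩ := hN2 (B ((k:ℝ)/4^(4+n)) ω - B (((k/4 : ℕ):ℝ)/4^(3+n)) ω)
          (9/50*(11/20)^n*x) (by positivity) hcon
        apply hU2' n θ hθN k (Finset.mem_range.2 (by omega))
        have heq : ∑ i, θ i * (B ((k:ℝ)/4^(4+n)) ω - B (((k/4 : ℕ):ℝ)/4^(3+n)) ω) i =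
            ∑ i, θ i * (B ((k:ℝ)/4^(4+n)) ω i - B (((k/4 : ℕ):ℝ)/4^(3+n)) ω i) :=
          Finset.sum_congr rfl (fun i _ => by simp [PiLp.sub_apply])
        rw [heq] at hθlt
        exact hθlt
      have hallt : ∀ t ∈ Set.Icc (0:ℝ) 1, ‖B t ω‖ ≤ x :=
        fun t ht => chain (fun t => B t ω) (hcont ω) x hx0 H0 H1 t ht
      have hSup : sSup {r : ℝ | ∃ u ∈ Set.Icc (0 : ℝ) 1, ∃ v ∈ Set.Icc (0 : ℝ) 1,
          r = ‖B u ω - B v ω‖} ≤ s := by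
        apply Real.sSup_le
        · rintro r ⟨u, hu, v, hv, rfl⟩
          calc ‖B u ω - B v ω‖ ≤ ‖B u ω‖ + ‖B v ω‖ := norm_sub_le _ _
            _ ≤ x + x := add_le_add (hallt u hu) (hallt v hv)
            _ = s := by rw [hxdef]; ring
        · linarith
      rw [hA, Set.mem_setOf_eq] at hω
      exact absurd hω (not_lt.2 hSup)
    -- measure bound for level-0 events
    have hbound0 : ∀ θ ∈ N, ∀ k ∈ Finset.range (4^3+1),
        μ (E0 θ k) ≤ ENNReal.ofReal e := by
      intro θ hθ k hk
      have hk64 : k ≤ 64 := by have := Finset.mem_range.1 hk; omega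
      have hk' : (k:ℝ) ≤ 64 := by exact_mod_cast hk64
      have hkr0 : (0:ℝ) ≤ (k:ℝ) := Nat.cast_nonneg _
      have hu : (k:ℝ)/4^3 ∈ Set.Icc (0:ℝ) 1 := by
        constructor
        · positivity
        · rw [div_le_one (by norm_num)]; norm_num; linarith
      have hsq : (0:ℝ) ≤ ((k:ℝ)/4^3 - 1/2)^2 := sq_nonneg _
      have hW1 : (k:ℝ)/4^3 - ((k:ℝ)/4^3)*((k:ℝ)/4^3) ≤ 1/4 := by nlinarith
      have hW2 : (1/4:ℝ) ≤ (9/10*(3/5*x))^2 := by nlinarith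
      have hb := event_bound_single μ d B hmeas hgauss θ (hN1 θ hθ) ((k:ℝ)/4^3)
        (9/10*(3/5*x)) (1/4) hu (by positivity) hW1 hW2
      refine hb.trans (ENNReal.ofReal_le_ofReal (Real.exp_le_exp.2 ?_))
      rw [div_le_div_iff₀ (by norm_num) (by norm_num)]
      nlinarith
    -- measure bound for level-n events
    have hbound1 : ∀ (n : ℕ), ∀ θ ∈ N, ∀ k ∈ Finset.range (4^(4+n)+1),
        μ (E1 n θ k) ≤ ENNReal.ofReal (e * (1/8)^(n+1)) := by
      intro n θ hθ k hk
      have hkn : k ≤ 4^(4+n) := by have := Finset.mem_range.1 hk; omega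
      have hp : (0:ℝ) < (4:ℝ)^(4+n) := by positivity
      have hp3 : (0:ℝ) < (4:ℝ)^(3+n) := by positivity
      have hkr : (k:ℝ) ≤ (4:ℝ)^(4+n) := by
        calc (k:ℝ) ≤ ((4^(4+n) : ℕ):ℝ) := by exact_mod_cast hkn
          _ = (4:ℝ)^(4+n) := by push_cast; ring
      have h44 : (4:ℝ)^(4+n) = 4 * 4^(3+n) := by
        rw [show 4+n = (3+n)+1 by omega, pow_succ]; ring
      have hq4 : ((k/4:ℕ):ℝ) * 4 ≤ (k:ℝ) := by
        have : (k/4)*4 ≤ k := Nat.div_mul_le_self k 4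
        exact_mod_cast this
      have hvu : ((k/4 : ℕ):ℝ)/4^(3+n) ≤ (k:ℝ)/4^(4+n) := by
        rw [div_le_div_iff₀ hp3 hp, h44]
        nlinarith
      have huIcc : (k:ℝ)/4^(4+n) ∈ Set.Icc (0:ℝ) 1 := by
        constructor
        · positivity
        · rw [div_le_one hp]; exact hkr
      have hvIcc : ((k/4 : ℕ):ℝ)/4^(3+n) ∈ Set.Icc (0:ℝ) 1 := by
        constructor
        · positivity
        · rw [div_le_one hp3]
          have hnat : (k/4 : ℕ) ≤ 4^(3+n) := by
            have h4 : (4:ℕ)^(4+n) = 4^(3+n)*4 := by rw [show 4+n = (3+n)+1 by omega, pow_succ]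
            have := Nat.div_le_div_right (c := 4) hkn
            rwa [h4, Nat.mul_div_cancel _ (by norm_num)] at this
          calc ((k/4 : ℕ):ℝ) ≤ ((4^(3+n) : ℕ):ℝ) := by exact_mod_cast hnat
            _ = (4:ℝ)^(3+n) := by push_cast; ring
      have hW1 : (k:ℝ)/4^(4+n) - ((k/4 : ℕ):ℝ)/4^(3+n) ≤ 3/(4:ℝ)^(4+n) := by
        have h1 : (k:ℝ) - ((k/4:ℕ):ℝ) * 4 ≤ 3 := by
          have : k ≤ (k/4)*4 + 3 := by omega
          have h3 : (k:ℝ) ≤ ((k/4:ℕ):ℝ)*4 + 3 := by exact_mod_cast this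
          linarith
        rw [div_sub_div _ _ hp.ne' hp3.ne', div_le_div_iff₀ (by positivity) hp, h44]
        nlinarith [mul_le_mul_of_nonneg_right h1 (mul_pos hp3 hp3).le]
      have h121 : ((11/20:ℝ)^n)^2 = (121/400)^n := by rw [pow_two, ← mul_pow]; norm_num
      have hpow14 : ((1:ℝ)/4)^n ≤ (121/400)^n := pow_le_pow_left₀ (by norm_num) (by norm_num) n
      have hq0 : (0:ℝ) ≤ (121/400:ℝ)^n := by positivity
      have h4n : (0:ℝ) < (4:ℝ)^n := by positivity
      have hfrac : (3:ℝ)/(4:ℝ)^(4+n) = (3/256)*(1/4)^n := by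
        rw [pow_add, show ((1:ℝ)/4)^n = 1/(4:ℝ)^n by rw [div_pow]; norm_num]
        rw [div_mul_div_comm]
        norm_num
      have hW2 : 3/(4:ℝ)^(4+n) ≤ (9/10*(9/50*(11/20)^n*x))^2 := by
        rw [hfrac]
        have hrhs : (9/10*(9/50*(11/20)^n*x))^2 = (6561/250000)*((11/20:ℝ)^n)^2*x^2 := by ring
        rw [hrhs, h121]
        nlinarith [mul_le_mul_of_nonneg_left hx16 hq0,
          mul_le_mul_of_nonneg_left hpow14 (show (0:ℝ) ≤ 3/256 by norm_num)]
      have hb := event_bound_pair μ d B hmeas hgauss θ (hN1 θ hθ)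
        ((k:ℝ)/4^(4+n)) (((k/4 : ℕ):ℝ)/4^(3+n))
        (9/10*(9/50*(11/20)^n*x)) (3/(4:ℝ)^(4+n)) huIcc hvIcc hvu (by positivity) hW1 hW2
      refine hb.trans (ENNReal.ofReal_le_ofReal ?_)
      -- exp(-c²/(2W)) ≤ e * (1/8)^(n+1)
      have hexp1 : (9/10*(9/50*(11/20)^n*x))^2 / (2*(3/(4:ℝ)^(4+n))) =
          1679616/1500000 * (121/100)^n * x^2 := exp_ident n x
      have hbeta : ((7:ℝ)/10 + n/5) * x^2 ≤ 1679616/1500000 * (121/100)^n * x^2 :=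
        mul_le_mul_of_nonneg_right (beta_bound n) (by positivity)
      have hstep1 : Real.exp (-(9/10*(9/50*(11/20)^n*x))^2 / (2*(3/(4:ℝ)^(4+n)))) ≤
          Real.exp (-((7:ℝ)/10 + n/5) * x^2) := by
        apply Real.exp_le_exp.2
        rw [neg_div, hexp1]
        linarith
      have hsplit : Real.exp (-((7:ℝ)/10 + n/5) * x^2) = e * Real.exp (-(((n:ℝ)+1) * (x^2/5))) := by
        rw [he, ← Real.exp_add]
        congr 1
        ring
      have h8 : Real.exp (-(x^2/5)) ≤ 1/8 := by
        have h88 : (8:ℝ) ≤ Real.exp (x^2/5) := by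
          have he1 : (2.7:ℝ) ≤ Real.exp 1 := by
            have := Real.exp_one_gt_d9; linarith
          have h83 : (8:ℝ) ≤ Real.exp 3 := by
            calc (8:ℝ) ≤ 2.7^(3:ℕ) := by norm_num
              _ ≤ (Real.exp 1)^(3:ℕ) := pow_le_pow_left₀ (by norm_num) he1 3
              _ = Real.exp 3 := by
                  rw [← Real.exp_nat_mul]; norm_num
          exact h83.trans (Real.exp_le_exp.2 (by nlinarith))
        rw [Real.exp_neg]
        calc (Real.exp (x^2/5))⁻¹ ≤ 8⁻¹ := by
              apply inv_anti₀ (by norm_num) h88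
          _ = 1/8 := by norm_num
      have hstep2 : Real.exp (-(((n:ℝ)+1) * (x^2/5))) ≤ (1/8:ℝ)^(n+1) := by
        have : -(((n:ℝ)+1) * (x^2/5)) = ((n+1 : ℕ):ℝ) * (-(x^2/5)) := by push_cast; ring
        rw [this, Real.exp_nat_mul]
        exact pow_le_pow_left₀ (Real.exp_nonneg _) h8 (n+1)
      calc Real.exp (-(9/10*(9/50*(11/20)^n*x))^2 / (2*(3/(4:ℝ)^(4+n))))
          ≤ Real.exp (-((7:ℝ)/10 + n/5) * x^2) := hstep1
        _ = e * Real.exp (-(((n:ℝ)+1) * (x^2/5))) := hsplit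
        _ ≤ e * (1/8)^(n+1) := mul_le_mul_of_nonneg_left hstep2 he0
    -- final assembly
    have hS0b : μ S0 ≤ ENNReal.ofReal ((65 * N.card : ℝ) * e) := by
      calc μ S0 ≤ ∑ θ ∈ N, μ (⋃ k ∈ Finset.range (4^3+1), E0 θ k) :=
            measure_biUnion_finset_le _ _
        _ ≤ ∑ θ ∈ N, ∑ k ∈ Finset.range (4^3+1), μ (E0 θ k) :=
            Finset.sum_le_sum (fun θ _ => measure_biUnion_finset_le _ _)
        _ ≤ ∑ θ ∈ N, ∑ k ∈ Finset.range (4^3+1), ENNReal.ofReal e :=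
            Finset.sum_le_sum (fun θ hθ => Finset.sum_le_sum (fun k hk => hbound0 θ hθ k hk))
        _ = (N.card * (4^3+1) : ℕ) • ENNReal.ofReal e := by
            simp only [Finset.sum_const, Finset.card_range, smul_smul]
        _ = ENNReal.ofReal (((N.card * (4^3+1) : ℕ):ℝ) * e) := by
            rw [nsmul_eq_mul, ← ENNReal.ofReal_natCast, ← ENNReal.ofReal_mul (Nat.cast_nonneg _)]
        _ ≤ ENNReal.ofReal ((65 * N.card : ℝ) * e) := by
            apply ENNReal.ofReal_le_ofReal
            apply le_of_eq
            push_cast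
            ring
    have hT : ∀ n, μ (T n) ≤ ENNReal.ofReal ((64 * N.card : ℝ) * e * (1/2)^n) := by
      intro n
      calc μ (T n) ≤ ∑ θ ∈ N, ∑ k ∈ Finset.range (4^(4+n)+1), μ (E1 n θ k) := by
            refine (measure_biUnion_finset_le _ _).trans ?_
            exact Finset.sum_le_sum (fun θ _ => measure_biUnion_finset_le _ _)
        _ ≤ ∑ θ ∈ N, ∑ k ∈ Finset.range (4^(4+n)+1), ENNReal.ofReal (e * (1/8)^(n+1)) :=
            Finset.sum_le_sum (fun θ hθ => Finset.sum_le_sum (fun k hk => hbound1 n θ hθ k hk))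
        _ = (N.card * (4^(4+n)+1) : ℕ) • ENNReal.ofReal (e * (1/8)^(n+1)) := by
            simp only [Finset.sum_const, Finset.card_range, smul_smul]
        _ = ENNReal.ofReal (((N.card * (4^(4+n)+1) : ℕ):ℝ) * (e * (1/8)^(n+1))) := by
            rw [nsmul_eq_mul, ← ENNReal.ofReal_natCast, ← ENNReal.ofReal_mul (Nat.cast_nonneg _)]
        _ ≤ ENNReal.ofReal ((64 * N.card : ℝ) * e * (1/2)^n) := by
            apply ENNReal.ofReal_le_ofReal
            push_cast
            have hc1 : ((4:ℝ)^(4+n)+1) ≤ 512*4^n := by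
              rw [pow_add]
              have h14 : (1:ℝ) ≤ 4^n := one_le_pow₀ (by norm_num)
              nlinarith
            have hps : ((4:ℝ)^n) * ((1/8:ℝ)^n) = (1/2)^n := by
              rw [← mul_pow]; norm_num
            have hcount : ((4:ℝ)^(4+n)+1) * (1/8)^(n+1) ≤ 64 * (1/2)^n := by
              have h8p : (0:ℝ) < (1/8:ℝ)^(n+1) := by positivity
              calc ((4:ℝ)^(4+n)+1) * (1/8)^(n+1) ≤ (512*4^n) * (1/8)^(n+1) :=
                    mul_le_mul_of_nonneg_right hc1 h8p.le
                _ = 64 * ((4:ℝ)^n * ((1/8:ℝ)^n)) := by rw [pow_succ]; ring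
                _ = 64 * (1/2)^n := by rw [hps]
            have hNe : (0:ℝ) ≤ (N.card : ℝ) * e := by positivity
            nlinarith [mul_le_mul_of_nonneg_left hcount hNe]
    have htail : μ (⋃ n, T n) ≤ ENNReal.ofReal ((128 * N.card : ℝ) * e) := by
      have h12 : ENNReal.ofReal (1/2:ℝ) = 2⁻¹ := by
        rw [show (1/2:ℝ) = (2:ℝ)⁻¹ by norm_num, ENNReal.ofReal_inv_of_pos (by norm_num)]
        norm_num
      calc μ (⋃ n, T n) ≤ ∑' n, μ (T n) := measure_iUnion_le _
        _ ≤ ∑' n, ENNReal.ofReal ((64 * N.card : ℝ) * e) * (ENNReal.ofReal (1/2:ℝ))^n := by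
            apply ENNReal.tsum_le_tsum
            intro n
            refine (hT n).trans ?_
            rw [← ENNReal.ofReal_pow (by norm_num), ← ENNReal.ofReal_mul (by positivity)]
        _ = ENNReal.ofReal ((64 * N.card : ℝ) * e) * ∑' n : ℕ, (ENNReal.ofReal (1/2:ℝ))^n :=
            ENNReal.tsum_mul_left
        _ = ENNReal.ofReal ((64 * N.card : ℝ) * e) * 2 := by
            rw [ENNReal.tsum_geometric, h12, ENNReal.one_sub_inv_two, inv_inv]
        _ = ENNReal.ofReal ((128 * N.card : ℝ) * e) := by
            rw [show (2:ENNReal) = ENNReal.ofReal (2:ℝ) by norm_num,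
              ← ENNReal.ofReal_mul (by positivity)]
            congr 1
            ring
    have hpos65 : (0:ℝ) ≤ (65 * N.card : ℝ) * e :=
      mul_nonneg (mul_nonneg (by norm_num) (Nat.cast_nonneg _)) he0
    have hpos128 : (0:ℝ) ≤ (128 * N.card : ℝ) * e :=
      mul_nonneg (mul_nonneg (by norm_num) (Nat.cast_nonneg _)) he0
    have hadd : ENNReal.ofReal ((65 * N.card : ℝ) * e) + ENNReal.ofReal ((128 * N.card : ℝ) * e)
        = ENNReal.ofReal ((193 * N.card : ℝ) * e) := by
      rw [← ENNReal.ofReal_add hpos65 hpos128]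
      congr 1
      ring
    have htotal : μ A ≤ ENNReal.ofReal ((193 * N.card : ℝ) * e) := by
      calc μ A ≤ μ (S0 ∪ ⋃ n, T n) := measure_mono hsub
        _ ≤ μ S0 + μ (⋃ n, T n) := measure_union_le _ _
        _ ≤ ENNReal.ofReal ((65 * N.card : ℝ) * e) + ENNReal.ofReal ((128 * N.card : ℝ) * e) :=
            add_le_add hS0b htail
        _ = ENNReal.ofReal ((193 * N.card : ℝ) * e) := hadd
    have hfin : (μ A).toReal ≤ (193 * N.card : ℝ) * e := by
      have h := ENNReal.toReal_mono ENNReal.ofReal_ne_top htotal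
      rwa [ENNReal.toReal_ofReal
        (mul_nonneg (mul_nonneg (by norm_num) (Nat.cast_nonneg _)) he0)] at h
    have hee : e = Real.exp (-s^2/8) := by
      rw [he, hxdef]
      congr 1
      ring
    rw [hee] at hfin
    calc (μ A).toReal ≤ (193 * N.card : ℝ) * Real.exp (-s^2/8) := hfin
      _ ≤ (193 * N.card + Real.exp 8 + 1) * Real.exp (-s^2/8) := by
          apply mul_le_mul_of_nonneg_right _ (Real.exp_nonneg _)
          linarith [Real.exp_pos (8:ℝ)]
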